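/- Let h : (ℝ^d)^n → ℝ^d be O(d)-equivariant and permutation-invariant, i.e., h(v_{σ(1)},...,v_{σ(n)}) = h(v₁,...,vₙ) for all σ ∈ Sₙ. Then there exists a single O(d)-invariant scalar function f : (ℝ^d)^n → ℝ, symmetric in its last n-1 arguments, such that h(v₁,...,vₙ) = Σ_{t=1}^n f(vₜ, v₁,...,v_{t-1},v_{t+1},...,vₙ) · vₜ. -/

import Mathlib

/-!
If `Q` is the orthogonal reflection through the span of the inputs `v`, then `Q` fixes every
`vᵢ`, so equivariance gives `Q (h v) = h v`, i.e. `h v` lies in that span. Solving the normal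
equations `(Bᵀ B) c = Bᵀ (h v)`, with `B` the matrix whose columns are the `vᵢ`, yields
coefficients `c v` with `h v = ∑ (c v)ᵢ vᵢ`; they depend on `v` only through the inner products
`⟨vᵢ, vⱼ⟩` and `⟨vᵢ, h v⟩`, hence are `O(d)`-invariant. Averaging the coefficient of the first
input over all reorderings of the inputs gives a single function `f`, and permutation invariance
of `h` turns the average of the `(n + 1)!` reordered expansions back into `h v`.
-/

open Equiv Finset Matrix Nat

namespace Matrix

variable {m : Type*} [Fintype m] [DecidableEq m]

theorem exists_mem_orthogonalGroup_mulVec_eq_self_iff (W : Submodule ℝ (m → ℝ)) :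
    ∃ Q ∈ orthogonalGroup m ℝ, ∀ x, Q *ᵥ x = x ↔ x ∈ W := by
  let W' := W.comap (WithLp.linearEquiv 2 ℝ (m → ℝ)).toLinearMap
  let R : EuclideanSpace ℝ m →L[ℝ] EuclideanSpace ℝ m := W'.reflection.toContinuousLinearMap
  have hR : R ∈ unitary _ := (Unitary.linearIsometryEquiv.symm W'.reflection).property
  let e : (EuclideanSpace ℝ m →L[ℝ] EuclideanSpace ℝ m) →⋆ₐ[ℝ] Matrix m m ℝ :=
    (toEuclideanCLM (n := m) (𝕜 := ℝ)).symm
  refine ⟨e R, Unitary.map_mem e hR, fun x => ?_⟩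
  have hx : e R *ᵥ x = (W'.reflection (WithLp.toLp 2 x)).ofLp := by
    rw [← ofLp_toEuclideanCLM]
    exact congrArg (fun L => (L (WithLp.toLp 2 x)).ofLp)
      ((toEuclideanCLM (n := m) (𝕜 := ℝ)).apply_symm_apply R)
  change _ ↔ WithLp.toLp 2 x ∈ W'
  rw [hx, ← W'.reflection_eq_self_iff]
  exact ⟨congrArg (WithLp.toLp 2), congrArg WithLp.ofLp⟩

theorem transpose_mul_self_of_mem_orthogonalGroup {Q : Matrix m m ℝ}
    (hQ : Q ∈ orthogonalGroup m ℝ) : Qᵀ * Q = 1 := by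
  simpa [mem_orthogonalGroup_iff', star_eq_conjTranspose] using hQ

end Matrix

section GramCoeffs

variable {R m ι : Type*} [Field R] [LinearOrder R] [IsStrictOrderedRing R] [Fintype m]
  [Fintype ι]

open Classical in
/-- Coefficients of `x` in the columns of `B`, chosen among the solutions of the normal equations
so that they depend on `B` and `x` only through `Bᵀ * B` and `Bᵀ *ᵥ x`. -/
noncomputable def gramCoeffs (B : Matrix m ι R) (x : m → R) : ι → R :=
  if h : ∃ c, (Bᵀ * B) *ᵥ c = Bᵀ *ᵥ x then h.choose else 0

theorem mulVec_gramCoeffs {B : Matrix m ι R} {x : m → R}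
    (hx : x ∈ LinearMap.range B.mulVecLin) : B *ᵥ gramCoeffs B x = x := by
  obtain ⟨a, rfl⟩ := hx
  have hsol : ∃ c, (Bᵀ * B) *ᵥ c = Bᵀ *ᵥ B *ᵥ a := ⟨a, by rw [mulVec_mulVec]⟩
  have hker : gramCoeffs B (B *ᵥ a) - a ∈ LinearMap.ker (Bᵀ * B).mulVecLin := by
    rw [LinearMap.mem_ker, mulVecLin_apply, mulVec_sub, gramCoeffs, dif_pos hsol,
      hsol.choose_spec, mulVec_mulVec, sub_self]
  rwa [ker_mulVecLin_transpose_mul_self, LinearMap.mem_ker, mulVecLin_apply, mulVec_sub,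
    sub_eq_zero] at hker

theorem gramCoeffs_mul_mulVec [DecidableEq m] {Q : Matrix m m ℝ} (hQ : Q ∈ orthogonalGroup m ℝ)
    (B : Matrix m ι ℝ) (x : m → ℝ) : gramCoeffs (Q * B) (Q *ᵥ x) = gramCoeffs B x := by
  have hQQ := transpose_mul_self_of_mem_orthogonalGroup hQ
  have hgram : (Q * B)ᵀ * (Q * B) = Bᵀ * B := by
    rw [transpose_mul, Matrix.mul_assoc, ← Matrix.mul_assoc Qᵀ, hQQ, Matrix.one_mul]
  have hrhs : (Q * B)ᵀ *ᵥ Q *ᵥ x = Bᵀ *ᵥ x := by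
    rw [mulVec_mulVec, transpose_mul, Matrix.mul_assoc, hQQ, Matrix.mul_one]
  rw [gramCoeffs, gramCoeffs, hgram, hrhs]

end GramCoeffs

section OrthogonalEquivariant

variable {m ι : Type*} [Fintype m] [DecidableEq m]

theorem mem_span_range_of_orthogonal_equivariant {h : (ι → m → ℝ) → m → ℝ}
    (hQ : ∀ Q ∈ orthogonalGroup m ℝ, ∀ v, h (fun i => Q *ᵥ v i) = Q *ᵥ h v)
    (v : ι → m → ℝ) : h v ∈ Submodule.span ℝ (Set.range v) := by
  obtain ⟨Q, hQmem, hfix⟩ :=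
    exists_mem_orthogonalGroup_mulVec_eq_self_iff (Submodule.span ℝ (Set.range v))
  have hv : (fun i => Q *ᵥ v i) = v :=
    funext fun i => (hfix _).2 (Submodule.subset_span ⟨i, rfl⟩)
  rw [← hfix, ← hQ Q hQmem, hv]

theorem exists_orthogonal_invariant_coeffs [Fintype ι] {h : (ι → m → ℝ) → m → ℝ}
    (hQ : ∀ Q ∈ orthogonalGroup m ℝ, ∀ v, h (fun i => Q *ᵥ v i) = Q *ᵥ h v) :
    ∃ c : (ι → m → ℝ) → ι → ℝ, (∀ Q ∈ orthogonalGroup m ℝ, ∀ v, c (fun i => Q *ᵥ v i) = c v) ∧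
      ∀ v, ∑ i, c v i • v i = h v := by
  refine ⟨fun v => gramCoeffs (of v)ᵀ (h v), fun Q hQmem v => ?_, fun v => ?_⟩
  · have hcols : (of fun i => Q *ᵥ v i)ᵀ = Q * (of v)ᵀ := by
      ext; simp [mul_apply, mulVec, dotProduct]
    simp only [hcols, hQ Q hQmem, gramCoeffs_mul_mulVec hQmem]
  · have hcols : ∀ c, (of v)ᵀ *ᵥ c = ∑ i, c i • v i := fun c => by
      rw [mulVec_transpose, vecMul_eq_sum]; rfl
    rw [← hcols]
    apply mulVec_gramCoeffs
    rw [range_mulVecLin]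
    simpa using mem_span_range_of_orthogonal_equivariant hQ v

end OrthogonalEquivariant

section Symmetrize

variable {K X : Type*} [Field K] {n : ℕ}

/-- `σ⁻¹ 0` is the position of `w` in the reordered tuple `Fin.cons w ws ∘ σ`. -/
noncomputable def symmetrizedCoeff (c : (Fin (n + 1) → X) → Fin (n + 1) → K) (w : X)
    (ws : Fin n → X) : K :=
  ((n + 1)! : K)⁻¹ * ∑ σ : Perm (Fin (n + 1)), c (Fin.cons w ws ∘ σ) (σ⁻¹ 0)

theorem symmetrizedCoeff_comp {c : (Fin (n + 1) → X) → Fin (n + 1) → K} {g : X → X}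
    (hc : ∀ v, c (g ∘ v) = c v) (w : X) (ws : Fin n → X) :
    symmetrizedCoeff c (g w) (g ∘ ws) = symmetrizedCoeff c w ws := by
  simp only [symmetrizedCoeff, ← Fin.comp_cons, Function.comp_assoc, hc]

theorem symmetrizedCoeff_comp_perm (c : (Fin (n + 1) → X) → Fin (n + 1) → K) (w : X)
    (ws : Fin n → X) (τ : Perm (Fin n)) :
    symmetrizedCoeff c w (ws ∘ τ) = symmetrizedCoeff c w ws := by
  let τ' : Perm (Fin (n + 1)) := Perm.decomposeFin.symm (0, τ)
  have hcons : Fin.cons w (ws ∘ τ) = Fin.cons w ws ∘ τ' := by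
    ext i
    cases i using Fin.cases <;> simp [τ']
  have hτ' : τ'⁻¹ 0 = 0 := by simp [τ', Perm.inv_def, symm_apply_eq]
  unfold symmetrizedCoeff
  rw [hcons, Fintype.sum_equiv (Equiv.mulLeft τ')]
  intro σ
  rw [coe_mulLeft, _root_.mul_inv_rev, Perm.mul_apply, hτ', Perm.coe_mul, Function.comp_assoc]

theorem sum_symmetrizedCoeff_smul [CharZero K] [AddCommGroup X] [Module K X]
    {c : (Fin (n + 1) → X) → Fin (n + 1) → K} {F : (Fin (n + 1) → X) → X}
    (hc : ∀ v, ∑ i, c v i • v i = F v) (hF : ∀ (σ : Perm (Fin (n + 1))) v, F (v ∘ σ) = F v)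
    (v : Fin (n + 1) → X) :
    ∑ t, symmetrizedCoeff c (v t) (v ∘ t.succAbove) • v t = F v := by
  have hcons : ∀ t, Fin.cons (v t) (v ∘ t.succAbove) = v ∘ t.cycleRange.symm :=
    Fin.cons_removeNth_eq_comp_cycleRange_symm v
  have hreindex : ∀ t, ∑ σ : Perm (Fin (n + 1)), c (v ∘ t.cycleRange.symm ∘ σ) (σ⁻¹ 0) • v t =
      ∑ ρ : Perm (Fin (n + 1)), c (v ∘ ρ) (ρ⁻¹ t) • v t := fun t =>
    Fintype.sum_equiv (Equiv.mulLeft t.cycleRange.symm) _ _ fun σ => by simp [Perm.inv_def]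
  calc ∑ t, symmetrizedCoeff c (v t) (v ∘ t.succAbove) • v t
      = ((n + 1)! : K)⁻¹ • ∑ t, ∑ ρ : Perm (Fin (n + 1)), c (v ∘ ρ) (ρ⁻¹ t) • v t := by
        simp only [symmetrizedCoeff, hcons, Function.comp_assoc, mul_smul, Finset.sum_smul,
          hreindex, Finset.smul_sum]
    _ = ((n + 1)! : K)⁻¹ • ∑ ρ : Perm (Fin (n + 1)), F (v ∘ ρ) := by
        rw [Finset.sum_comm]
        congr 1
        refine Finset.sum_congr rfl fun ρ _ => ?_
        rw [← hc, ← Equiv.sum_comp ρ]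
        simp
    _ = F v := by
        simp [hF, Fintype.card_perm, ← Nat.cast_smul_eq_nsmul K, smul_smul, factorial_ne_zero]

end Symmetrize

/-- An O(d)-equivariant, permutation-invariant vector function of n+1
vectors is a combination of the inputs with a single O(d)-invariant coefficient
function that is symmetric in its last n arguments. -/
theorem permutation_invariant_od_equivariant (d n : ℕ)
    (h : (Fin (n + 1) → Fin d → ℝ) → Fin d → ℝ)
    (hQ : ∀ Q : Matrix (Fin d) (Fin d) ℝ, Q ∈ Matrix.orthogonalGroup (Fin d) ℝ →
      ∀ v : Fin (n + 1) → Fin d → ℝ, h (fun i => Q.mulVec (v i)) = Q.mulVec (h v))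
    (hperm : ∀ σ : Equiv.Perm (Fin (n + 1)), ∀ v : Fin (n + 1) → Fin d → ℝ,
      h (v ∘ σ) = h v) :
    ∃ f : (Fin d → ℝ) → (Fin n → Fin d → ℝ) → ℝ,
      (∀ Q : Matrix (Fin d) (Fin d) ℝ, Q ∈ Matrix.orthogonalGroup (Fin d) ℝ →
        ∀ (w : Fin d → ℝ) (ws : Fin n → Fin d → ℝ),
          f (Q.mulVec w) (fun j => Q.mulVec (ws j)) = f w ws) ∧
      (∀ τ : Equiv.Perm (Fin n), ∀ (w : Fin d → ℝ) (ws : Fin n → Fin d → ℝ),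
        f w (ws ∘ τ) = f w ws) ∧
      (∀ v : Fin (n + 1) → Fin d → ℝ,
        h v = ∑ t, f (v t) (fun j => v (t.succAbove j)) • v t) := by
  obtain ⟨c, hc_inv, hc_sum⟩ := exists_orthogonal_invariant_coeffs hQ
  exact ⟨symmetrizedCoeff c,
    fun Q hQmem => symmetrizedCoeff_comp (g := (Q *ᵥ ·)) (hc_inv Q hQmem),
    fun τ w ws => symmetrizedCoeff_comp_perm c w ws τ,
    fun v => (sum_symmetrizedCoeff_smul hc_sum hperm v).symm⟩
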